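/- arXiv:1806.09608 — 4 statements merged into one kernel-verified Lean document; each statement's English description precedes it below -/
import Mathlib

section
/- Let (X,d) be a compact metric space and (f_n) a sequence of continuous feebly open self-maps of X commuting with a continuous map f : X → X such that Σ_{i=1}^∞ D(f_i, f) < ∞. Let F be a translation-invariant Furstenberg family. If the autonomous system (X,f) is F-transitive, then the non-autonomous system (X, f_{1,∞}) is F-transitive. -/
open Set

/-- `ncomp f k n = f (k+n-1) ∘ ⋯ ∘ f k`; `ncomp f 1 n = f_1^n`. -/
def ncomp {X : Type*} (f : ℕ → X → X) (k : ℕ) : ℕ → X → X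
  | 0 => id
  | n + 1 => f (k + n) ∘ ncomp f k n

/-- Supremum metric. -/
noncomputable def supDist {X : Type*} [MetricSpace X] (g h : X → X) : ℝ :=
  ⨆ x, dist (g x) (h x)

/-- A map is feebly open if images of non-empty open sets have non-empty interior. -/
def FeeblyOpen {X : Type*} [TopologicalSpace X] (g : X → X) : Prop :=
  ∀ U : Set X, IsOpen U → U.Nonempty → (interior (g '' U)).Nonempty

/-- Hitting-time set of the non-autonomous system `f_{k,∞}`. -/
def hitSet {X : Type*} (f : ℕ → X → X) (k : ℕ) (U V : Set X) : Set ℕ :=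
  {n : ℕ | (ncomp f k n '' U ∩ V).Nonempty}

/-- Hitting-time set of the autonomous system generated by `g`. -/
def hitSetAut {X : Type*} (g : X → X) (U V : Set X) : Set ℕ :=
  {n : ℕ | (g^[n] '' U ∩ V).Nonempty}

/-- Furstenberg family: upward hereditary. -/
def IsFurstenbergFamily (F : Set (Set ℕ)) : Prop :=
  ∀ A B : Set ℕ, A ⊆ B → A ∈ F → B ∈ F

/-- Translation invariance of a Furstenberg family. -/
def TranslationInvariant (F : Set (Set ℕ)) : Prop :=
  ∀ S ∈ F, ∀ i : ℕ, ((fun n => n + i) '' S) ∈ F ∧ ((fun n => n - i) '' S) ∈ F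

/-!
Fix a ball `B(v, δ) ⊆ V` and `N` with `∑_{i > N} D(f_i, g) < δ/2`. Since the `f_i` commute
with `g`, the tail system `f_{N+1,∞}` shadows `g` within that tail sum:
`d(f_{N+1}^n y, g^n y) < δ/2` for all `n` and `y`. The set `W = int f_1^N(U)` is non-empty because
the `f_i` are feebly open, so `N_g(W, B(v, δ/2)) ∈ F`, and its translate by `N` lies in
`N_{f_{1,∞}}(U, V)`.
-/

open Metric

section Composition

variable {X : Type*} (f : ℕ → X → X)

lemma ncomp_add (k m n : ℕ) : ncomp f k (m + n) = ncomp f (k + m) n ∘ ncomp f k m := by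
  induction n with
  | zero => rfl
  | succ n ih => rw [← add_assoc, ncomp, ih, ncomp, add_assoc]; rfl

lemma ncomp_succ_apply (k n : ℕ) (x : X) : ncomp f k (n + 1) x = ncomp f (k + 1) n (f k x) := by
  rw [add_comm n, ncomp_add]; rfl

end Composition

section FeeblyOpen

variable {X : Type*} [TopologicalSpace X]

lemma feeblyOpen_id : FeeblyOpen (id : X → X) := fun U hU hne => by
  rwa [image_id, hU.interior_eq]

lemma FeeblyOpen.comp {g h : X → X} (hg : FeeblyOpen g) (hh : FeeblyOpen h) :
    FeeblyOpen (g ∘ h) := fun U hU hne =>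
  (hg _ isOpen_interior (hh U hU hne)).mono <| interior_mono <| by
    rw [image_comp]; exact image_mono interior_subset

lemma feeblyOpen_ncomp {f : ℕ → X → X} (hf : ∀ n, FeeblyOpen (f n)) (k n : ℕ) :
    FeeblyOpen (ncomp f k n) := by
  induction n with
  | zero => exact feeblyOpen_id
  | succ n ih => exact (hf _).comp ih

end FeeblyOpen

section Shadowing

variable {X : Type*} [MetricSpace X]

lemma supDist_nonneg (g h : X → X) : 0 ≤ supDist g h :=
  Real.iSup_nonneg fun _ => dist_nonneg

lemma dist_le_supDist [BoundedSpace X] (g h : X → X) (x : X) : dist (g x) (h x) ≤ supDist g h :=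
  le_ciSup (f := fun y => dist (g y) (h y)) ⟨diam (univ : Set X), by
    rintro _ ⟨y, rfl⟩; exact dist_le_diam_of_mem BoundedSpace.bounded_univ trivial trivial⟩ x

variable [BoundedSpace X] {f : ℕ → X → X} {g : X → X}

lemma dist_ncomp_iterate_le (hcomm : ∀ n, Function.Commute g (f n)) (k n : ℕ) (x : X) :
    dist (ncomp f k n x) (g^[n] x) ≤ ∑ i ∈ Finset.range n, supDist (f (i + k)) g := by
  induction n generalizing k x with
  | zero => simp [ncomp]
  | succ n ih =>
    -- `g^[n]` commutes with `f k`, so the first step compares `f k` with `g` at the point `g^[n] x`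
    have hfirst : dist (g^[n] (f k x)) (g^[n + 1] x) ≤ supDist (f k) g := by
      rw [((hcomm k).iterate_left n).eq, Function.iterate_succ_apply']
      exact dist_le_supDist _ _ _
    calc dist (ncomp f k (n + 1) x) (g^[n + 1] x)
        ≤ dist (ncomp f (k + 1) n (f k x)) (g^[n] (f k x))
          + dist (g^[n] (f k x)) (g^[n + 1] x) := by
          rw [ncomp_succ_apply]; exact dist_triangle _ _ _
      _ ≤ ∑ i ∈ Finset.range n, supDist (f (i + (k + 1))) g + supDist (f k) g :=
          add_le_add (ih _ _) hfirst
      _ = ∑ i ∈ Finset.range (n + 1), supDist (f (i + k)) g := by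
          simp only [Finset.sum_range_succ' _ n, zero_add, add_right_comm _ 1 k, add_assoc]

lemma dist_ncomp_iterate_le_tsum (hcomm : ∀ n, Function.Commute g (f n))
    (hsum : Summable fun i => supDist (f i) g) (k n : ℕ) (x : X) :
    dist (ncomp f k n x) (g^[n] x) ≤ ∑' i, supDist (f (i + k)) g :=
  (dist_ncomp_iterate_le hcomm k n x).trans <|
    ((summable_nat_add_iff k).2 hsum).sum_le_tsum _ fun _ _ => supDist_nonneg _ _

end Shadowing

lemma image_add_hitSetAut_subset_hitSet {X : Type*} [MetricSpace X] {f : ℕ → X → X}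
    {g : X → X} {k N : ℕ} {U W : Set X} {v : X} {r ε : ℝ} (hW : W ⊆ ncomp f k N '' U)
    (hclose : ∀ n y, dist (ncomp f (k + N) n y) (g^[n] y) < ε) :
    (· + N) '' hitSetAut g W (ball v r) ⊆ hitSet f k U (ball v (r + ε)) := by
  rintro _ ⟨n, ⟨_, ⟨y, hyW, rfl⟩, hyv⟩, rfl⟩
  obtain ⟨x, hxU, rfl⟩ := hW hyW
  refine ⟨ncomp f k (n + N) x, ⟨x, hxU, rfl⟩, ?_⟩
  rw [add_comm n, ncomp_add, Function.comp_apply, mem_ball]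
  calc dist (ncomp f (k + N) n (ncomp f k N x)) v
      ≤ dist (ncomp f (k + N) n (ncomp f k N x)) (g^[n] (ncomp f k N x))
        + dist (g^[n] (ncomp f k N x)) v := dist_triangle _ _ _
    _ < ε + r := add_lt_add (hclose _ _) hyv
    _ = r + ε := add_comm _ _

theorem Ftransitive_of_Ftransitive_limit_general {X : Type*} [MetricSpace X] [CompactSpace X]
    (f : ℕ → X → X) (hfo : ∀ n, FeeblyOpen (f n))
    (g : X → X)
    (hcomm : ∀ n, g ∘ f n = f n ∘ g)
    (hsum : Summable (fun i => supDist (f i) g))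
    (F : Set (Set ℕ)) (hF : IsFurstenbergFamily F) (hFt : TranslationInvariant F)
    (htrans : ∀ U V : Set X, IsOpen U → IsOpen V → U.Nonempty → V.Nonempty →
      hitSetAut g U V ∈ F) :
    ∀ U V : Set X, IsOpen U → IsOpen V → U.Nonempty → V.Nonempty →
      hitSet f 1 U V ∈ F := by
  intro U V hU hV hUne ⟨v, hv⟩
  obtain ⟨δ, hδ, hball⟩ := isOpen_iff.1 hV v hv
  obtain ⟨N, hN⟩ := Filter.eventually_atTop.1 <|
    (tendsto_sum_nat_add fun i => supDist (f i) g).eventually (gt_mem_nhds (half_pos hδ))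
  have hcomm' (i : ℕ) : Function.Commute g (f i) := Function.semiconj_iff_comp_eq.2 (hcomm i)
  have hclose (n : ℕ) (y : X) : dist (ncomp f (1 + N) n y) (g^[n] y) < δ / 2 :=
    (dist_ncomp_iterate_le_tsum hcomm' hsum _ n y).trans_lt (hN _ (Nat.le_add_left N 1))
  have hS := htrans _ _ isOpen_interior isOpen_ball
    (feeblyOpen_ncomp hfo 1 N U hU hUne) ⟨v, mem_ball_self (half_pos hδ)⟩
  refine hF _ _ ?_ (hFt _ hS N).1
  refine (image_add_hitSetAut_subset_hitSet interior_subset hclose).trans ?_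
  rintro n ⟨x, hx, hxv⟩
  exact ⟨x, hx, hball (by rwa [add_halves] at hxv)⟩

theorem Ftransitive_of_Ftransitive_limit {X : Type*} [MetricSpace X] [CompactSpace X]
    (f : ℕ → X → X) (hc : ∀ n, Continuous (f n)) (hfo : ∀ n, FeeblyOpen (f n))
    (g : X → X) (hg : Continuous g)
    (hcomm : ∀ n, g ∘ f n = f n ∘ g)
    (hsum : Summable (fun i => supDist (f i) g))
    (F : Set (Set ℕ)) (hF : IsFurstenbergFamily F) (hFt : TranslationInvariant F)
    (htrans : ∀ U V : Set X, IsOpen U → IsOpen V → U.Nonempty → V.Nonempty →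
      hitSetAut g U V ∈ F) :
    ∀ U V : Set X, IsOpen U → IsOpen V → U.Nonempty → V.Nonempty →
      hitSet f 1 U V ∈ F :=
  Ftransitive_of_Ftransitive_limit_general f hfo g hcomm hsum F hF hFt htrans
end

section
/- Let (X, f_{1,∞}) be a non-autonomous system on a compact metric space and (K(X), f̄_{1,∞}) the induced hyperspace system. If (K(X), f̄_{1,∞}) is F-mixing for a Furstenberg family F, then (X, f_{1,∞}) is F-mixing. -/
open Set TopologicalSpace

theorem ncomp_continuous {X : Type*} [TopologicalSpace X] (f : ℕ → X → X)
    (hc : ∀ n, Continuous (f n)) (k n : ℕ) : Continuous (ncomp f k n) := by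
  induction n with
  | zero => exact continuous_id
  | succ n ih => exact (hc (k + n)).comp ih

/-- The induced `n`-th stage map on the hyperspace of non-empty compact subsets. -/
noncomputable def hyperIter {X : Type*} [MetricSpace X] (f : ℕ → X → X)
    (hc : ∀ n, Continuous (f n)) (n : ℕ) :
    NonemptyCompacts X → NonemptyCompacts X := fun K =>
  ⟨⟨ncomp f 1 n '' K, K.isCompact.image (ncomp_continuous f hc 1 n)⟩,
    K.nonempty.image _⟩

/-- `F`-mixing of the base non-autonomous system `(X, f_{1,∞})`. -/
def FMixingBase {X : Type*} [TopologicalSpace X] (f : ℕ → X → X)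
    (F : Set (Set ℕ)) : Prop :=
  ∀ U₁ U₂ V₁ V₂ : Set X, IsOpen U₁ → IsOpen U₂ → IsOpen V₁ → IsOpen V₂ →
    U₁.Nonempty → U₂.Nonempty → V₁.Nonempty → V₂.Nonempty →
      {n : ℕ | (ncomp f 1 n '' U₁ ∩ V₁).Nonempty ∧
        (ncomp f 1 n '' U₂ ∩ V₂).Nonempty} ∈ F

/-- `F`-mixing of the induced hyperspace system `(K(X), f̄_{1,∞})`. -/
def FMixingHyper {X : Type*} [MetricSpace X] (f : ℕ → X → X)
    (hc : ∀ n, Continuous (f n)) (F : Set (Set ℕ)) : Prop :=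
  ∀ 𝒰₁ 𝒰₂ 𝒱₁ 𝒱₂ : Set (NonemptyCompacts X),
    IsOpen 𝒰₁ → IsOpen 𝒰₂ → IsOpen 𝒱₁ → IsOpen 𝒱₂ →
    𝒰₁.Nonempty → 𝒰₂.Nonempty → 𝒱₁.Nonempty → 𝒱₂.Nonempty →
      {n : ℕ | (hyperIter f hc n '' 𝒰₁ ∩ 𝒱₁).Nonempty ∧
        (hyperIter f hc n '' 𝒰₂ ∩ 𝒱₂).Nonempty} ∈ F

theorem Fmixing_of_hyperspace_Fmixing {X : Type*} [MetricSpace X] [CompactSpace X]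
    (f : ℕ → X → X) (hc : ∀ n, Continuous (f n))
    (F : Set (Set ℕ)) (hF : IsFurstenbergFamily F)
    (hmix : FMixingHyper f hc F) : FMixingBase f F := by
  -- the "contained in U" set is open in the Hausdorff metric
  have hopen : ∀ U : Set X, IsOpen U →
      IsOpen {K : NonemptyCompacts X | (K : Set X) ⊆ U} := by
    intro U hU
    rw [Metric.isOpen_iff]
    intro K hK
    obtain ⟨δ, hδ, hth⟩ := K.isCompact.exists_thickening_subset_open hU hK
    refine ⟨δ, hδ, fun L hL => ?_⟩
    intro y hy
    have hne : EMetric.hausdorffEdist (L : Set X) (K : Set X) ≠ ⊤ :=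
      Metric.hausdorffEdist_ne_top_of_nonempty_of_bounded L.nonempty K.nonempty
        L.isCompact.isBounded K.isCompact.isBounded
    have hd : Metric.hausdorffDist (L : Set X) (K : Set X) < δ := by
      rw [Metric.mem_ball, Metric.NonemptyCompacts.dist_eq] at hL; exact hL
    obtain ⟨x, hx, hxy⟩ := Metric.exists_dist_lt_of_hausdorffDist_lt hy hd hne
    exact hth (Metric.mem_thickening_iff.2 ⟨x, hx, hxy⟩)
  have hne : ∀ U : Set X, U.Nonempty →
      {K : NonemptyCompacts X | (K : Set X) ⊆ U}.Nonempty := by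
    rintro U ⟨x, hx⟩
    exact ⟨⟨⟨{x}, isCompact_singleton⟩, Set.singleton_nonempty x⟩, by
      simpa using hx⟩
  intro U₁ U₂ V₁ V₂ hU₁ hU₂ hV₁ hV₂ hnU₁ hnU₂ hnV₁ hnV₂
  have key := hmix _ _ _ _ (hopen U₁ hU₁) (hopen U₂ hU₂) (hopen V₁ hV₁)
    (hopen V₂ hV₂) (hne U₁ hnU₁) (hne U₂ hnU₂) (hne V₁ hnV₁) (hne V₂ hnV₂)
  refine hF _ _ ?_ key
  intro n hn
  obtain ⟨⟨K₁, ⟨L₁, hL₁, rfl⟩, hK₁⟩, ⟨K₂, ⟨L₂, hL₂, rfl⟩, hK₂⟩⟩ := hn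
  obtain ⟨x₁, hx₁⟩ := L₁.nonempty
  obtain ⟨x₂, hx₂⟩ := L₂.nonempty
  exact ⟨⟨ncomp f 1 n x₁, ⟨x₁, hL₁ hx₁, rfl⟩, hK₁ ⟨x₁, hx₁, rfl⟩⟩,
    ⟨ncomp f 1 n x₂, ⟨x₂, hL₂ hx₂, rfl⟩, hK₂ ⟨x₂, hx₂, rfl⟩⟩⟩
end

section
/- Let X and Y be compact metric spaces with non-autonomous systems (X, f_{1,∞}) and (Y, g_{1,∞}), and form the product system (X × Y, h_{1,∞}) with h_n = f_n × g_n. Then for all non-empty open sets U₁, V₁ ⊆ X and U₂, V₂ ⊆ Y, N_{h_{1,∞}}(U₁ × U₂, V₁ × V₂) = N_{f_{1,∞}}(U₁, V₁) ∩ N_{g_{1,∞}}(U₂, V₂). In particular, if F is a filterdual Furstenberg family (kF · kF ⊆ kF) and both (X, f_{1,∞}) and (Y, g_{1,∞}) are kF-transitive, then the product system is kF-transitive. -/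
open Set

/-- The dual family `kF`. -/
def dualFamily (F : Set (Set ℕ)) : Set (Set ℕ) :=
  {A : Set ℕ | ∀ B ∈ F, (A ∩ B).Nonempty}

lemma ncomp_prod {X Y : Type*} (f : ℕ → X → X) (g : ℕ → Y → Y) (k n : ℕ) (p : X × Y) :
    ncomp (fun n (p : X × Y) => (f n p.1, g n p.2)) k n p =
      (ncomp f k n p.1, ncomp g k n p.2) := by
  induction n with
  | zero => rfl
  | succ n ih => simp [ncomp, Function.comp, ih]

lemma prod_hitSet {X Y : Type*} (f : ℕ → X → X) (g : ℕ → Y → Y)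
    (U₁ V₁ : Set X) (U₂ V₂ : Set Y) :
    hitSet (fun n (p : X × Y) => (f n p.1, g n p.2)) 1 (U₁ ×ˢ U₂) (V₁ ×ˢ V₂) =
      hitSet f 1 U₁ V₁ ∩ hitSet g 1 U₂ V₂ := by
  ext n
  simp only [hitSet, mem_setOf_eq, Set.mem_inter_iff]
  constructor
  · rintro ⟨p, ⟨⟨q, hq, hqp⟩, hpV⟩⟩
    rw [ncomp_prod] at hqp
    subst hqp
    exact ⟨⟨_, ⟨⟨q.1, hq.1, rfl⟩, hpV.1⟩⟩, ⟨_, ⟨⟨q.2, hq.2, rfl⟩, hpV.2⟩⟩⟩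
  · rintro ⟨⟨x, ⟨⟨x₀, hx₀, rfl⟩, hxV⟩⟩, ⟨y, ⟨⟨y₀, hy₀, rfl⟩, hyV⟩⟩⟩
    refine ⟨(ncomp f 1 n x₀, ncomp g 1 n y₀), ⟨(x₀, y₀), ⟨hx₀, hy₀⟩, ?_⟩, ⟨hxV, hyV⟩⟩
    rw [ncomp_prod]

lemma hitSet_mono {X : Type*} (f : ℕ → X → X) {U U' V V' : Set X}
    (hU : U ⊆ U') (hV : V ⊆ V') : hitSet f 1 U V ⊆ hitSet f 1 U' V' := by
  rintro n ⟨p, ⟨q, hq, rfl⟩, hp⟩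
  exact ⟨_, ⟨q, hU hq, rfl⟩, hV hp⟩

lemma dualFamily_mono {F : Set (Set ℕ)} {A B : Set ℕ} (h : A ⊆ B)
    (hA : A ∈ dualFamily F) : B ∈ dualFamily F := fun C hC =>
  (hA C hC).mono (inter_subset_inter_left _ h)

theorem product_hitSet_eq_and_kF_transitive {X Y : Type*}
    [MetricSpace X] [CompactSpace X] [MetricSpace Y] [CompactSpace Y]
    (f : ℕ → X → X) (hcf : ∀ n, Continuous (f n))
    (g : ℕ → Y → Y) (hcg : ∀ n, Continuous (g n))
    (F : Set (Set ℕ)) (hF : IsFurstenbergFamily F) :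
    (∀ U₁ V₁ : Set X, ∀ U₂ V₂ : Set Y,
      IsOpen U₁ → IsOpen V₁ → IsOpen U₂ → IsOpen V₂ →
      U₁.Nonempty → V₁.Nonempty → U₂.Nonempty → V₂.Nonempty →
        hitSet (fun n (p : X × Y) => (f n p.1, g n p.2)) 1 (U₁ ×ˢ U₂) (V₁ ×ˢ V₂) =
          hitSet f 1 U₁ V₁ ∩ hitSet g 1 U₂ V₂) ∧
    ((∀ A ∈ dualFamily F, ∀ B ∈ dualFamily F, A ∩ B ∈ dualFamily F) →
      (∀ U V : Set X, IsOpen U → IsOpen V → U.Nonempty → V.Nonempty →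
        hitSet f 1 U V ∈ dualFamily F) →
      (∀ U V : Set Y, IsOpen U → IsOpen V → U.Nonempty → V.Nonempty →
        hitSet g 1 U V ∈ dualFamily F) →
      (∀ W₁ W₂ : Set (X × Y), IsOpen W₁ → IsOpen W₂ → W₁.Nonempty → W₂.Nonempty →
        hitSet (fun n (p : X × Y) => (f n p.1, g n p.2)) 1 W₁ W₂ ∈ dualFamily F)) := by
  constructor
  · intro U₁ V₁ U₂ V₂ _ _ _ _ _ _ _ _
    exact prod_hitSet f g U₁ V₁ U₂ V₂
  · intro hinter htf htg W₁ W₂ hW₁ hW₂ ⟨w₁, hw₁⟩ ⟨w₂, hw₂⟩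
    obtain ⟨U₁, U₂, hU₁, hU₂, hu₁, hu₂, hUsub⟩ := isOpen_prod_iff.mp hW₁ w₁.1 w₁.2 hw₁
    obtain ⟨V₁, V₂, hV₁, hV₂, hv₁, hv₂, hVsub⟩ := isOpen_prod_iff.mp hW₂ w₂.1 w₂.2 hw₂
    have hsub : hitSet (fun n (p : X × Y) => (f n p.1, g n p.2)) 1 (U₁ ×ˢ U₂) (V₁ ×ˢ V₂)
        ⊆ hitSet (fun n (p : X × Y) => (f n p.1, g n p.2)) 1 W₁ W₂ :=
      hitSet_mono _ hUsub hVsub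
    refine dualFamily_mono hsub ?_
    rw [prod_hitSet]
    exact hinter _ (htf U₁ V₁ hU₁ hV₁ ⟨_, hu₁⟩ ⟨_, hv₁⟩) _
      (htg U₂ V₂ hU₂ hV₂ ⟨_, hu₂⟩ ⟨_, hv₂⟩)
end

section
/- Let I = [0,1], and define g₂(x) = 3x for x ∈ [0,1/3] and g₂(x) = −(3/2)x + 3/2 for x ∈ [1/3,1]. Define f₁(x) = 1 for x ∈ [0,1/3] and f₁(x) = −(3/2)x + 3/2 for x ∈ [1/3,1], and f_n = g₂ for n > 1. Then for the non-autonomous system (I, f_{1,∞}), with U = (0,1/6) and V = (1/2,3/4), the hitting set N_{f_{1,∞}}(U,V) = {n : f_1^n(U) ∩ V ≠ ∅} is empty; hence (I, f_{1,∞}) is not topologically transitive, even though each truncated system (I, f_{k,∞}) for k ≥ 2 is the autonomous system generated by g₂. -/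
open Set

noncomputable def g₂ : ℝ → ℝ := fun x => if x ≤ 1/3 then 3*x else -(3/2)*x + 3/2

noncomputable def fOne : ℝ → ℝ := fun x => if x ≤ 1/3 then 1 else -(3/2)*x + 3/2

/-- The sequence `f₁, g₂, g₂, g₂, …` (indexed from 1). -/
noncomputable def seqF : ℕ → ℝ → ℝ := fun n => if n = 1 then fOne else g₂

/-- Transitivity of the non-autonomous system on the subspace `I = [0,1]` of `ℝ`. -/
def TransOnUnitNA (f : ℕ → ℝ → ℝ) : Prop :=
  ∀ U V : Set ℝ, IsOpen U → IsOpen V →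
    (U ∩ Icc (0:ℝ) 1).Nonempty → (V ∩ Icc (0:ℝ) 1).Nonempty →
      ∃ n : ℕ, 1 ≤ n ∧
        (ncomp f 1 n '' (U ∩ Icc (0:ℝ) 1) ∩ (V ∩ Icc (0:ℝ) 1)).Nonempty

lemma g₂_one : g₂ 1 = 0 := by norm_num [g₂]

lemma g₂_zero : g₂ 0 = 0 := by norm_num [g₂]

lemma orbit_eval (x : ℝ) (hx : x ∈ Ioo (0:ℝ) (1/6)) (n : ℕ) (hn : 1 ≤ n) :
    ncomp seqF 1 n x = if n = 1 then 1 else 0 := by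
  induction n with
  | zero => omega
  | succ m ih =>
    rcases Nat.eq_or_lt_of_le hn with h | h
    · -- m = 0
      have hm : m = 0 := by omega
      subst hm
      have hx3 : x ≤ 1/3 := le_of_lt (lt_trans hx.2 (by norm_num))
      show fOne x = if 0 + 1 = 1 then 1 else 0
      simp only [show (0:ℕ)+1 = 1 from rfl, if_pos rfl]
      exact if_pos hx3
    · have hm : 1 ≤ m := by omega
      have hx' := ih hm
      simp only [ncomp, Function.comp_apply]
      have hseq : seqF (1 + m) = g₂ := by
        have : 1 + m ≠ 1 := by omega
        simp [seqF, this, show m ≠ 0 by omega]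
      rw [hseq, hx']
      by_cases h1 : m = 1
      · have : m + 1 ≠ 1 := by omega
        rw [if_pos h1, if_neg this, g₂_one]
      · have : m + 1 ≠ 1 := by omega
        rw [if_neg h1, if_neg this, g₂_zero]

lemma empty_hitting :
    {n : ℕ | 1 ≤ n ∧
        (ncomp seqF 1 n '' Ioo (0:ℝ) (1/6) ∩ Ioo (1/2 : ℝ) (3/4)).Nonempty} = ∅ := by
  ext n
  simp only [mem_setOf_eq, mem_empty_iff_false, iff_false, not_and]
  intro hn ⟨y, ⟨⟨x, hx, hxy⟩, hyV⟩⟩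
  rw [orbit_eval x hx n hn] at hxy
  by_cases h1 : n = 1
  · rw [h1] at hxy; simp at hxy
    rw [← hxy] at hyV
    exact absurd hyV.2 (by norm_num)
  · simp [h1] at hxy
    rw [← hxy] at hyV
    exact absurd hyV.1 (by norm_num)

theorem nonfeeble_counterexample :
    {n : ℕ | 1 ≤ n ∧
        (ncomp seqF 1 n '' Ioo (0:ℝ) (1/6) ∩ Ioo (1/2 : ℝ) (3/4)).Nonempty} = ∅ ∧
    ¬ TransOnUnitNA seqF ∧
    (∀ k, 2 ≤ k → ∀ n, ncomp seqF k n = g₂^[n]) := by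
  refine ⟨empty_hitting, ?_, ?_⟩
  · intro h
    have hU : Ioo (0:ℝ) (1/6) ∩ Icc (0:ℝ) 1 = Ioo (0:ℝ) (1/6) := by
      apply inter_eq_left.2
      intro x hx
      exact ⟨le_of_lt hx.1, le_trans (le_of_lt hx.2) (by norm_num)⟩
    have hV : Ioo (1/2:ℝ) (3/4) ∩ Icc (0:ℝ) 1 = Ioo (1/2:ℝ) (3/4) := by
      apply inter_eq_left.2
      intro x hx
      exact ⟨le_trans (by norm_num) (le_of_lt hx.1), le_trans (le_of_lt hx.2) (by norm_num)⟩
    obtain ⟨n, hn, hne⟩ := h (Ioo 0 (1/6)) (Ioo (1/2) (3/4)) isOpen_Ioo isOpen_Ioo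
      (by rw [hU]; exact ⟨1/12, by norm_num⟩) (by rw [hV]; exact ⟨0.6, by norm_num⟩)
    rw [hU, hV] at hne
    have hmem : n ∈ ({n : ℕ | 1 ≤ n ∧
        (ncomp seqF 1 n '' Ioo (0:ℝ) (1/6) ∩ Ioo (1/2 : ℝ) (3/4)).Nonempty} : Set ℕ) :=
      ⟨hn, hne⟩
    rw [empty_hitting] at hmem
    exact hmem
  · intro k hk n
    induction n with
    | zero => rfl
    | succ m ih =>
      have hseq : seqF (k + m) = g₂ := by
        have : k + m ≠ 1 := by omega
        simp [seqF, this]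
      show seqF (k + m) ∘ ncomp seqF k m = g₂^[m+1]
      rw [hseq, ih, Function.iterate_succ']
end
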